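/- Let m, n ≥ 1, let G ∈ ℝ^{m×n}, and let Δ ≥ 0. Define the single-level feasible set F := {(x, D, y, ω, v) ∈ Δ(m) × 𝒟 × Δ(n) × Δ(m) × ℝ : ((G+D)y)ᵢ ≥ v for all i, and ((G+D)ᵀω)ⱼ ≤ v for all j}, and the bilevel feasible set B := {(x, D, y) : x ∈ Δ(m), D ∈ 𝒟, y ∈ S(G+D)}. If (x*, D*, y*, ω*, v*) ∈ F satisfies x*ᵀG y* ≤ xᵀGy for all (x, D, y, ω, v) ∈ F, then (x*, D*, y*) ∈ B and x*ᵀG y* ≤ xᵀGy for all (x, D, y) ∈ B; that is, an optimal point of the single-level bilinear program yields an optimal solution of the bilevel deception program. -/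

import Mathlib

/-!
The constraints of the single-level program say that `(ω, y)` is a saddle point of `G + D` with
value `v`, so `v = v_{G+D}` and `y ∈ S(G + D)`. Conversely, by von Neumann's minimax theorem every
`(x, D, y)` with `y ∈ S(G + D)` becomes single-level feasible once completed by an optimal row
strategy `ω` and `v = v_{G+D}`; the objective ignores `ω` and `v`, so optimality transfers.

Minimax: let `c = min_{ω ∈ Δ(m)} max_j (ωᵀA)_j`. If no `y ∈ Δ(n)` had `Ay ≥ c`, a hyperplane
would separate the compact convex set `A(Δ(n))` from the orthant `{z ≥ c}`; its normal is
nonnegative because the orthant is unbounded upwards, and once normalized it is a row strategy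
with `max_j (ωᵀA)_j < c`.
-/

open Matrix Finset

/-- Set of admissible (stealthy) deceptions: every column has ℓ1 norm at most `Δ`. -/
def Dset (m n : ℕ) (Δ : ℝ) : Set (Matrix (Fin m) (Fin n) ℝ) :=
  {D | ∀ j, ∑ i, |D i j| ≤ Δ}

/-- Row player's best-response value against `y`: `min_{x ∈ Δ(m)} xᵀ A y`. -/
noncomputable def innerMin {m n : ℕ} (A : Matrix (Fin m) (Fin n) ℝ) (y : Fin n → ℝ) : ℝ :=
  sInf {r | ∃ x ∈ stdSimplex ℝ (Fin m), r = x ⬝ᵥ A *ᵥ y}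

/-- Value of the zero-sum game `A`: `max_{y ∈ Δ(n)} min_{x ∈ Δ(m)} xᵀ A y`. -/
noncomputable def gameValue {m n : ℕ} (A : Matrix (Fin m) (Fin n) ℝ) : ℝ :=
  sSup {r | ∃ y ∈ stdSimplex ℝ (Fin n), r = innerMin A y}

/-- Column player's security-policy set `S(A)`. -/
def secPolicies {m n : ℕ} (A : Matrix (Fin m) (Fin n) ℝ) : Set (Fin n → ℝ) :=
  {y | y ∈ stdSimplex ℝ (Fin n) ∧ ∀ i, gameValue A ≤ (A *ᵥ y) i}

/-- Set of inducible values `V_ind(G)`. -/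
def Vind {m n : ℕ} (G : Matrix (Fin m) (Fin n) ℝ) (Δ : ℝ) : Set ℝ :=
  {v | ∃ D ∈ Dset m n Δ, ∃ y ∈ stdSimplex ℝ (Fin n), ∀ i, v ≤ ((G + D) *ᵥ y) i}

/-- Robust victim objective: `min_{x ∈ Δ(m), D ∈ 𝒟} xᵀ (G' - D) y`. -/
noncomputable def robustObj {m n : ℕ} (G' : Matrix (Fin m) (Fin n) ℝ) (Δ : ℝ)
    (y : Fin n → ℝ) : ℝ :=
  sInf {r | ∃ x ∈ stdSimplex ℝ (Fin m), ∃ D ∈ Dset m n Δ, r = x ⬝ᵥ (G' - D) *ᵥ y}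

/-- Feasibility for the single-level bilinear program (7). -/
def Feas {m n : ℕ} (G : Matrix (Fin m) (Fin n) ℝ) (Δ : ℝ)
    (x : Fin m → ℝ) (D : Matrix (Fin m) (Fin n) ℝ) (y : Fin n → ℝ)
    (ω : Fin m → ℝ) (v : ℝ) : Prop :=
  x ∈ stdSimplex ℝ (Fin m) ∧ D ∈ Dset m n Δ ∧ y ∈ stdSimplex ℝ (Fin n) ∧
    ω ∈ stdSimplex ℝ (Fin m) ∧ (∀ i, v ≤ ((G + D) *ᵥ y) i) ∧
    (∀ j, ((G + D)ᵀ *ᵥ ω) j ≤ v)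

section Minimax

variable {ι κ : Type*} [Fintype ι]

lemma nonempty_of_mem_stdSimplex {x : ι → ℝ} (hx : x ∈ stdSimplex ℝ ι) : Nonempty ι := by
  by_contra h
  rw [not_nonempty_iff] at h
  simp [stdSimplex_of_isEmpty_index] at hx

lemma dotProduct_le_of_mem_stdSimplex {x w : ι → ℝ} {c : ℝ} (hx : x ∈ stdSimplex ℝ ι)
    (hw : ∀ i, w i ≤ c) : x ⬝ᵥ w ≤ c :=
  calc x ⬝ᵥ w ≤ ∑ i, x i * c :=
        Finset.sum_le_sum fun i _ => mul_le_mul_of_nonneg_left (hw i) (hx.1 i)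
    _ = c := by rw [← Finset.sum_mul, hx.2, one_mul]

lemma le_dotProduct_of_mem_stdSimplex {x w : ι → ℝ} {c : ℝ} (hx : x ∈ stdSimplex ℝ ι)
    (hw : ∀ i, c ≤ w i) : c ≤ x ⬝ᵥ w :=
  calc c = ∑ i, x i * c := by rw [← Finset.sum_mul, hx.2, one_mul]
    _ ≤ x ⬝ᵥ w := Finset.sum_le_sum fun i _ => mul_le_mul_of_nonneg_left (hw i) (hx.1 i)

lemma ContinuousLinearMap.apply_eq_dotProduct_single [DecidableEq ι] (φ : (ι → ℝ) →L[ℝ] ℝ)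
    (z : ι → ℝ) :
    φ z = z ⬝ᵥ fun i => φ (Pi.single i 1) := by
  conv_lhs => rw [← Finset.univ_sum_single z]
  simp only [map_sum, dotProduct]
  refine Finset.sum_congr rfl fun i _ => ?_
  rw [← smul_eq_mul, ← _root_.map_smul, ← Pi.single_smul, smul_eq_mul, mul_one]

lemma nonneg_of_forall_lt_add_mul {a b v : ℝ} (h : ∀ t : ℝ, 0 ≤ t → v < a + t * b) : 0 ≤ b := by
  by_contra! hb
  have := h ((|a - v| + 1) / -b) (div_nonneg (by positivity) (by linarith))
  rw [div_mul_eq_mul_div, div_neg, mul_div_cancel_right₀ _ hb.ne] at this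
  linarith [le_abs_self (a - v)]

lemma nonneg_of_forall_lt_dotProduct [DecidableEq ι] {g : ι → ℝ} {c v : ℝ}
    (h : ∀ z : ι → ℝ, (∀ i, c ≤ z i) → v < z ⬝ᵥ g) : 0 ≤ g := fun i =>
  nonneg_of_forall_lt_add_mul fun t ht => by
    have hz := h ((fun _ => c) + t • Pi.single i 1) fun k => by
      have : (0 : ι → ℝ) ≤ Pi.single i 1 := Pi.single_nonneg.2 zero_le_one
      simpa using mul_nonneg ht (this k)
    simpa [add_dotProduct, smul_dotProduct, single_dotProduct] using hz

theorem exists_vecMul_lt_of_forall_exists_mulVec_lt [Fintype κ] [Nonempty κ] (A : Matrix ι κ ℝ)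
    {c : ℝ} (h : ∀ y ∈ stdSimplex ℝ κ, ∃ i, (A *ᵥ y) i < c) :
    ∃ ω ∈ stdSimplex ℝ ι, ∀ j, (ω ᵥ* A) j < c := by
  classical
  have hdisj : Disjoint ((A *ᵥ ·) '' stdSimplex ℝ κ) (Set.univ.pi fun _ => Set.Ici c) := by
    rw [Set.disjoint_left]
    rintro _ ⟨y, hy, rfl⟩ hc
    obtain ⟨i, hi⟩ := h y hy
    exact (hc i trivial).not_gt hi
  obtain ⟨φ, u, v, hφu, huv, hvφ⟩ := geometric_hahn_banach_compact_closed
    ((convex_stdSimplex ℝ κ).linear_image A.mulVecLin)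
    ((isCompact_stdSimplex ℝ κ).image (by fun_prop))
    (convex_pi fun _ _ => convex_Ici c) (isClosed_set_pi fun _ _ => isClosed_Ici) hdisj
  obtain ⟨g, hφ⟩ : ∃ g : ι → ℝ, ∀ z, φ z = z ⬝ᵥ g := ⟨_, φ.apply_eq_dotProduct_single⟩
  simp only [hφ] at hφu hvφ
  have hg : 0 ≤ g := nonneg_of_forall_lt_dotProduct fun z hz => hvφ z fun i _ => hz i
  have hgA : ∀ j, (g ᵥ* A) j < u := fun j => by
    have := hφu _ ⟨_, single_mem_stdSimplex ℝ j, rfl⟩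
    simp only [mulVecLin_apply, mulVec_single_one, dotProduct_comm] at this
    exact this
  have hcg : v < c * ∑ i, g i := by
    simpa [dotProduct, Finset.mul_sum] using hvφ (fun _ => c) fun _ _ => Set.mem_Ici.2 le_rfl
  have hs : 0 < ∑ i, g i := by
    refine (Finset.sum_nonneg fun i _ => hg i).lt_of_ne fun hs => ?_
    have hg0 : g = 0 := funext fun i =>
      (Finset.sum_eq_zero_iff_of_nonneg fun i _ => hg i).1 hs.symm i (mem_univ i)
    have := hgA (Classical.arbitrary κ)
    simp only [hg0, zero_vecMul, Pi.zero_apply] at this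
    rw [← hs, mul_zero] at hcg
    linarith
  refine ⟨(∑ i, g i)⁻¹ • g, ⟨fun i => smul_nonneg (inv_nonneg.2 hs.le) (hg i), ?_⟩, fun j => ?_⟩
  · simp [← Finset.mul_sum, hs.ne']
  · rw [smul_vecMul, Pi.smul_apply, smul_eq_mul, inv_mul_lt_iff₀ hs]
    linarith [hgA j]

theorem exists_saddlePoint [Nonempty ι] [Fintype κ] [Nonempty κ] (A : Matrix ι κ ℝ) :
    ∃ ω ∈ stdSimplex ℝ ι, ∃ y ∈ stdSimplex ℝ κ, ∃ c : ℝ,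
      (∀ j, (ω ᵥ* A) j ≤ c) ∧ ∀ i, c ≤ (A *ᵥ y) i := by
  classical
  let f : (ι → ℝ) → ℝ := fun ω => univ.sup' univ_nonempty fun j => (ω ᵥ* A) j
  have hf : Continuous f := Continuous.finset_sup'_apply _ fun j _ => by fun_prop
  obtain ⟨ω, hω, hmin⟩ := (isCompact_stdSimplex ℝ ι).exists_isMinOn
    ⟨_, single_mem_stdSimplex ℝ (Classical.arbitrary ι)⟩ hf.continuousOn
  refine ⟨ω, hω, ?_⟩
  by_contra! hnone
  obtain ⟨ω', hω', hlt⟩ := exists_vecMul_lt_of_forall_exists_mulVec_lt A fun y hy =>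
    hnone y hy (f ω) (fun j => Finset.le_sup' (fun j => (ω ᵥ* A) j) (mem_univ j))
  exact (hmin hω').not_gt ((Finset.sup'_lt_iff _).2 fun j _ => hlt j)

end Minimax

section GameValue

variable {m n : ℕ} (A : Matrix (Fin m) (Fin n) ℝ)

lemma innerMin_le_dotProduct {x : Fin m → ℝ} {y : Fin n → ℝ} (hx : x ∈ stdSimplex ℝ (Fin m)) :
    innerMin A y ≤ x ⬝ᵥ A *ᵥ y := by
  have hS : {r | ∃ x ∈ stdSimplex ℝ (Fin m), r = x ⬝ᵥ A *ᵥ y} =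
      (· ⬝ᵥ A *ᵥ y) '' stdSimplex ℝ (Fin m) := by
    ext; simp [eq_comm]
  refine csInf_le ?_ ⟨x, hx, rfl⟩
  rw [hS]
  exact (isCompact_stdSimplex ℝ _).bddBelow_image (by fun_prop : Continuous _).continuousOn

lemma innerMin_le_of_vecMul_le {ω : Fin m → ℝ} {y : Fin n → ℝ} {c : ℝ}
    (hω : ω ∈ stdSimplex ℝ (Fin m)) (hy : y ∈ stdSimplex ℝ (Fin n))
    (hωA : ∀ j, (ω ᵥ* A) j ≤ c) : innerMin A y ≤ c := by
  refine (innerMin_le_dotProduct A hω).trans ?_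
  rw [dotProduct_mulVec, dotProduct_comm]
  exact dotProduct_le_of_mem_stdSimplex hy hωA

lemma gameValue_le_of_vecMul_le [Nonempty (Fin n)] {ω : Fin m → ℝ} {c : ℝ}
    (hω : ω ∈ stdSimplex ℝ (Fin m)) (hωA : ∀ j, (ω ᵥ* A) j ≤ c) : gameValue A ≤ c := by
  refine csSup_le ⟨_, _, single_mem_stdSimplex ℝ (Classical.arbitrary _), rfl⟩ ?_
  rintro _ ⟨y, hy, rfl⟩
  exact innerMin_le_of_vecMul_le A hω hy hωA

theorem gameValue_eq_of_saddlePoint {ω : Fin m → ℝ} {y : Fin n → ℝ} {c : ℝ}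
    (hω : ω ∈ stdSimplex ℝ (Fin m)) (hy : y ∈ stdSimplex ℝ (Fin n))
    (hωA : ∀ j, (ω ᵥ* A) j ≤ c) (hAy : ∀ i, c ≤ (A *ᵥ y) i) : gameValue A = c := by
  have := nonempty_of_mem_stdSimplex hy
  refine (gameValue_le_of_vecMul_le A hω hωA).antisymm ?_
  have hbdd : BddAbove {r | ∃ y ∈ stdSimplex ℝ (Fin n), r = innerMin A y} := by
    refine ⟨c, ?_⟩
    rintro _ ⟨y', hy', rfl⟩
    exact innerMin_le_of_vecMul_le A hω hy' hωA
  calc c ≤ innerMin A y := by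
        refine le_csInf ⟨_, ω, hω, rfl⟩ ?_
        rintro _ ⟨x, hx, rfl⟩
        exact le_dotProduct_of_mem_stdSimplex hx hAy
    _ ≤ gameValue A := le_csSup hbdd ⟨y, hy, rfl⟩

end GameValue

theorem single_level_solves_bilevel_general {m n : ℕ}
    (G : Matrix (Fin m) (Fin n) ℝ) (Δ : ℝ)
    (xs : Fin m → ℝ) (Ds : Matrix (Fin m) (Fin n) ℝ) (ys : Fin n → ℝ)
    (ωs : Fin m → ℝ) (vs : ℝ)
    (hfeas : Feas G Δ xs Ds ys ωs vs)
    (hopt : ∀ (x : Fin m → ℝ) (D : Matrix (Fin m) (Fin n) ℝ) (y : Fin n → ℝ)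
      (ω : Fin m → ℝ) (v : ℝ), Feas G Δ x D y ω v → xs ⬝ᵥ G *ᵥ ys ≤ x ⬝ᵥ G *ᵥ y) :
    (xs ∈ stdSimplex ℝ (Fin m) ∧ Ds ∈ Dset m n Δ ∧ ys ∈ secPolicies (G + Ds)) ∧
      ∀ x ∈ stdSimplex ℝ (Fin m), ∀ D ∈ Dset m n Δ, ∀ y ∈ secPolicies (G + D),
        xs ⬝ᵥ G *ᵥ ys ≤ x ⬝ᵥ G *ᵥ y := by
  obtain ⟨hxs, hDs, hys, hωs, hvs, hωvs⟩ := hfeas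
  have := nonempty_of_mem_stdSimplex hys
  refine ⟨⟨hxs, hDs, hys, fun i => ?_⟩, ?_⟩
  · have hωvs' : ∀ j, (ωs ᵥ* (G + Ds)) j ≤ vs := by simpa only [mulVec_transpose] using hωvs
    exact (gameValue_le_of_vecMul_le _ hωs hωvs').trans (hvs i)
  rintro x hx D hD y ⟨hy, hyv⟩
  have := nonempty_of_mem_stdSimplex hx
  obtain ⟨ω, hω, y', hy', c, hωc, hcy'⟩ := exists_saddlePoint (G + D)
  rw [gameValue_eq_of_saddlePoint _ hω hy' hωc hcy'] at hyv
  exact hopt x D y ω c ⟨hx, hD, hy, hω, hyv, by simpa only [mulVec_transpose] using hωc⟩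

/-- an optimal point of the single-level bilinear program yields an optimal
solution of the bilevel deception program. -/
theorem single_level_solves_bilevel {m n : ℕ} (hm : 1 ≤ m) (hn : 1 ≤ n)
    (G : Matrix (Fin m) (Fin n) ℝ) (Δ : ℝ) (hΔ : 0 ≤ Δ)
    (xs : Fin m → ℝ) (Ds : Matrix (Fin m) (Fin n) ℝ) (ys : Fin n → ℝ)
    (ωs : Fin m → ℝ) (vs : ℝ)
    (hfeas : Feas G Δ xs Ds ys ωs vs)
    (hopt : ∀ (x : Fin m → ℝ) (D : Matrix (Fin m) (Fin n) ℝ) (y : Fin n → ℝ)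
      (ω : Fin m → ℝ) (v : ℝ), Feas G Δ x D y ω v → xs ⬝ᵥ G *ᵥ ys ≤ x ⬝ᵥ G *ᵥ y) :
    (xs ∈ stdSimplex ℝ (Fin m) ∧ Ds ∈ Dset m n Δ ∧ ys ∈ secPolicies (G + Ds)) ∧
      ∀ x ∈ stdSimplex ℝ (Fin m), ∀ D ∈ Dset m n Δ, ∀ y ∈ secPolicies (G + D),
        xs ⬝ᵥ G *ᵥ ys ≤ x ⬝ᵥ G *ᵥ y :=
  single_level_solves_bilevel_general G Δ xs Ds ys ωs vs hfeas hopt
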